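/- arXiv:2311.00661 — 2 statements merged into one kernel-verified Lean document; each statement's English description precedes it below -/
import Mathlib

section
/- Let Λ be a finite dimensional algebra over a field and k ≥ 1. For every finitely generated Λ-module M, the k-effective delooping level of M is at most its k-delooping level: k-edell M ≤ k-dell M. -/
open CategoryTheory

namespace Paper

variable (Λ : Type) [Ring Λ]

/-- `f : P ⟶ M` is a projective cover: `P` is projective, `f` is surjective and its
kernel is superfluous in `P`. -/
def IsProjCover {P M : ModuleCat.{0} Λ} (f : P ⟶ M) : Prop :=
  Projective P ∧ Function.Surjective f ∧
    ∀ N : Submodule Λ P, N ⊔ LinearMap.ker f.hom = ⊤ → N = ⊤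

/-- `S` is (isomorphic to) the syzygy `Ω M`, i.e. the kernel of a projective cover of `M`. -/
def IsSyz (S M : ModuleCat.{0} Λ) : Prop :=
  ∃ (P : ModuleCat.{0} Λ) (f : P ⟶ M), IsProjCover Λ f ∧
    Nonempty (S ≅ ModuleCat.of Λ (LinearMap.ker f.hom))

/-- `S` is (isomorphic to) the `n`-th syzygy `Ω^n M`. -/
def IsNthSyz : ℕ → ModuleCat.{0} Λ → ModuleCat.{0} Λ → Prop
  | 0, S, M => Nonempty (S ≅ M)
  | n + 1, S, M => ∃ T, IsNthSyz n T M ∧ IsSyz Λ S T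

/-- `f : M ⟶ I` is an injective envelope: `I` is injective, `f` is injective and its
image is an essential submodule of `I`. -/
def IsInjEnv {M I : ModuleCat.{0} Λ} (f : M ⟶ I) : Prop :=
  Injective I ∧ Function.Injective f ∧
    ∀ N : Submodule Λ I, N ⊓ LinearMap.range f.hom = ⊥ → N = ⊥

/-- `C` is (isomorphic to) the cosyzygy `Σ M`, the cokernel of the injective envelope of `M`. -/
def IsCosyz (C M : ModuleCat.{0} Λ) : Prop :=
  ∃ (I : ModuleCat.{0} Λ) (f : M ⟶ I), IsInjEnv Λ f ∧
    Nonempty (C ≅ ModuleCat.of Λ (I ⧸ LinearMap.range f.hom))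

/-- `C` is (isomorphic to) the `n`-th cosyzygy `Σ^n M`. -/
def IsNthCosyz : ℕ → ModuleCat.{0} Λ → ModuleCat.{0} Λ → Prop
  | 0, C, M => Nonempty (C ≅ M)
  | n + 1, C, M => ∃ T, IsNthCosyz n T M ∧ IsCosyz Λ C T

/-- `S` is a direct summand of `T` up to projective direct summands. -/
def SummandUpToProj (S T : ModuleCat.{0} Λ) : Prop :=
  ∃ (X P : ModuleCat.{0} Λ), Projective P ∧
    Nonempty (ModuleCat.of Λ (S × X) ≅ ModuleCat.of Λ (T × P))

/-- `Ω^n M` is a direct summand of `Ω^{n+k} N` up to projectives, for some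
finitely generated `N`. -/
def kdellLE (k : ℕ) (M : ModuleCat.{0} Λ) (n : ℕ) : Prop :=
  ∃ (S N T : ModuleCat.{0} Λ), Module.Finite Λ N ∧ IsNthSyz Λ n S M ∧
    IsNthSyz Λ (n + k) T N ∧ SummandUpToProj Λ S T

/-- The `k`-delooping level of a module. -/
noncomputable def kdell (k : ℕ) (M : ModuleCat.{0} Λ) : ℕ∞ :=
  sInf {c : ℕ∞ | ∃ n : ℕ, c = n ∧ kdellLE Λ k M n}

/-- The delooping level of the algebra `Λ`: the supremum of `dell S` over simple `S`. -/
noncomputable def dellAlg : ℕ∞ :=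
  sSup {c : ℕ∞ | ∃ S : ModuleCat.{0} Λ, IsSimpleModule Λ S ∧ kdell Λ 1 S = c}

/-- The injective dimension of `X`, defined via minimal injective resolutions:
`id X ≤ n` iff the `n`-th (minimal) cosyzygy of `X` is injective. -/
noncomputable def injDim (X : ModuleCat.{0} Λ) : ℕ∞ :=
  sInf {c : ℕ∞ | ∃ n : ℕ, c = n ∧ ∃ C, IsNthCosyz Λ n C X ∧ Injective C}

/-- The big finitistic dimension of `Λᵒᵖ`, computed as the supremum of the finite
injective dimensions of finitely generated (right) `Λ`-modules. -/
noncomputable def findimOp : ℕ∞ :=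
  sSup {c : ℕ∞ | ∃ X : ModuleCat.{0} Λ, Module.Finite Λ X ∧ injDim Λ X = c ∧ c ≠ ⊤}

/-- The Ext-groups of `Λ`-modules (as abelian groups). -/
noncomputable abbrev extGrp (n : ℕ) (M X : ModuleCat.{0} Λ) : ModuleCat ℤ :=
  ((Ext ℤ (ModuleCat.{0} Λ) n).obj (Opposite.op M)).obj X

/-- `k`-effective delooping level is at most `n`: for every finitely generated `X` with
`id X = n + (k-1) + k' > n + (k-1)` one has `Ext^{n+k'}(M, X) = 0`. -/
def kedellLE (k : ℕ) (M : ModuleCat.{0} Λ) (n : ℕ) : Prop :=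
  ∀ (X : ModuleCat.{0} Λ), Module.Finite Λ X → ∀ k' : ℕ, 0 < k' →
    injDim Λ X = ((n + (k - 1) + k' : ℕ) : ℕ∞) →
    Subsingleton (extGrp Λ (n + k') M X)

/-- The `k`-effective delooping level of a module. -/
noncomputable def kedell (k : ℕ) (M : ModuleCat.{0} Λ) : ℕ∞ :=
  sInf {c : ℕ∞ | ∃ n : ℕ, c = n ∧ kedellLE Λ k M n}

/-- The effective delooping level of the algebra `Λ`. -/
noncomputable def edellAlg : ℕ∞ :=
  sSup {c : ℕ∞ | ∃ S : ModuleCat.{0} Λ, IsSimpleModule Λ S ∧ kedell Λ 1 S = c}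

/-- An exact sequence `0 → C n → ⋯ → C 1 → C 0 → M → 0` of finitely generated modules
(encoded by a `ℕ`-indexed sequence vanishing beyond `n`). -/
structure ExSeq (n : ℕ) (M : ModuleCat.{0} Λ) where
  C : ℕ → ModuleCat.{0} Λ
  fin : ∀ i, Module.Finite Λ (C i)
  triv : ∀ i, n < i → Subsingleton (C i)
  f : ∀ i, C (i + 1) ⟶ C i
  g : C 0 ⟶ M
  surj : Function.Surjective g
  exact₀ : Function.Exact (f 0) g
  exact : ∀ i, Function.Exact (f (i + 1)) (f i)

/-- `k`-derived delooping level is at most `m`. -/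
def kddellLE (k : ℕ) (M : ModuleCat.{0} Λ) (m : ℕ) : Prop :=
  ∃ n ≤ m, ∃ seq : ExSeq Λ n M, ∀ i ≤ n, kdell Λ (i + k) (seq.C i) ≤ ((m - i : ℕ) : ℕ∞)

/-- The `k`-derived delooping level of a module. -/
noncomputable def kddell (k : ℕ) (M : ModuleCat.{0} Λ) : ℕ∞ :=
  sInf {c : ℕ∞ | ∃ m : ℕ, c = m ∧ kddellLE Λ k M m}

/-- The `k`-derived delooping level of the algebra `Λ`. -/
noncomputable def kddellAlg (k : ℕ) : ℕ∞ :=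
  sSup {c : ℕ∞ | ∃ S : ModuleCat.{0} Λ, IsSimpleModule Λ S ∧ kddell Λ k S = c}

/-- The sub-derived delooping level of a module: `inf { dell N | M ↪ N }`. -/
noncomputable def subddell (M : ModuleCat.{0} Λ) : ℕ∞ :=
  sInf {c : ℕ∞ | ∃ (N : ModuleCat.{0} Λ), Module.Finite Λ N ∧
    (∃ f : M ⟶ N, Function.Injective f) ∧ kdell Λ 1 N = c}

/-- The sub-derived delooping level of the algebra `Λ`. -/
noncomputable def subddellAlg : ℕ∞ :=
  sSup {c : ℕ∞ | ∃ S : ModuleCat.{0} Λ, IsSimpleModule Λ S ∧ subddell Λ S = c}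

/-- The projective dimension of `X`: `pd X ≤ n` iff the `n`-th (minimal) syzygy of `X`
is projective. -/
noncomputable def projDim (X : ModuleCat.{0} Λ) : ℕ∞ :=
  sInf {c : ℕ∞ | ∃ n : ℕ, c = n ∧ ∃ S, IsNthSyz Λ n S X ∧ Projective S}

/-- The little finitistic dimension of `Λ`. -/
noncomputable def findim : ℕ∞ :=
  sSup {c : ℕ∞ | ∃ X : ModuleCat.{0} Λ, Module.Finite Λ X ∧ projDim Λ X = c ∧ c ≠ ⊤}

end Paper


namespace Aux5

variable {Λ : Type} [Ring Λ]

structure MyRes (Y : ModuleCat.{0} Λ) where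
  Q : ℕ → ModuleCat.{0} Λ
  projQ : ∀ i, Projective (Q i)
  d : ∀ i, Q (i + 1) ⟶ Q i
  g : Q 0 ⟶ Y
  surj : Function.Surjective g
  exact₀ : Function.Exact (d 0) g
  exact : ∀ i, Function.Exact (d (i + 1)) (d i)

variable {Y X : ModuleCat.{0} Λ}

noncomputable def MyRes.cx (R : MyRes Y) : ChainComplex (ModuleCat.{0} Λ) ℕ :=
  ChainComplex.of R.Q R.d (fun n => by
    ext x
    exact (R.exact n).apply_apply_eq_zero x)

@[simp] lemma MyRes.cx_X (R : MyRes Y) (n : ℕ) : R.cx.X n = R.Q n := rfl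

@[simp] lemma MyRes.cx_d (R : MyRes Y) (n : ℕ) : R.cx.d (n + 1) n = R.d n :=
  ChainComplex.of_d _ _ _

lemma MyRes.dg (R : MyRes Y) : R.cx.d 1 0 ≫ R.g = 0 := by
  rw [MyRes.cx_d]
  ext x
  exact R.exact₀.apply_apply_eq_zero x

noncomputable def MyRes.pi (R : MyRes Y) :
    R.cx ⟶ (ChainComplex.single₀ (ModuleCat.{0} Λ)).obj Y :=
  (ChainComplex.toSingle₀Equiv _ _).symm ⟨R.g, R.dg⟩

@[simp] lemma MyRes.pi_f0 (R : MyRes Y) : R.pi.f 0 = R.g :=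
  ChainComplex.toSingle₀Equiv_symm_apply_f_zero _ _

noncomputable def MyRes.res (R : MyRes Y) : ProjectiveResolution Y where
  complex := R.cx
  projective n := R.projQ n
  π := R.pi
  quasiIso := ⟨fun n => by
    cases n with
    | zero =>
        rw [ChainComplex.quasiIsoAt₀_iff, ShortComplex.quasiIso_iff_of_zeros']
        · refine ⟨?_, ?_⟩
          · rw [ShortComplex.moduleCat_exact_iff]
            intro x hx
            dsimp [HomologicalComplex.shortComplexFunctor'] at hx ⊢
            simp only [MyRes.pi_f0] at hx
            obtain ⟨y, hy⟩ := (R.exact₀ x).mp hx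
            exact ⟨y, hy⟩
          · dsimp [HomologicalComplex.shortComplexFunctor']
            simp only [MyRes.pi_f0]
            rw [ModuleCat.epi_iff_surjective]
            exact R.surj
        · rfl
        · rfl
        · rfl
    | succ n =>
        rw [quasiIsoAt_iff_exactAt']
        · rw [HomologicalComplex.exactAt_iff' _ (n + 2) (n + 1) n (by simp) (by simp)]
          rw [ShortComplex.moduleCat_exact_iff]
          intro x hx
          dsimp [HomologicalComplex.sc', HomologicalComplex.shortComplexFunctor'] at hx ⊢
          rw [MyRes.cx_d] at hx
          obtain ⟨y, hy⟩ := (R.exact n x).mp hx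
          exact ⟨y, by rw [MyRes.cx_d]; exact hy⟩
        · exact ChainComplex.exactAt_succ_single_obj _ _⟩


lemma subsingleton_iff_isZero (A : ModuleCat.{0} ℤ) :
    Subsingleton A ↔ Limits.IsZero A := by
  constructor
  · intro h
    exact ModuleCat.isZero_of_subsingleton A
  · intro h
    have h1 : (𝟙 A : A ⟶ A) = 0 := h.eq_of_src _ _
    have key : ∀ x : A, x = 0 := fun x => by
      have := congrArg (fun (f : A ⟶ A) => f x) h1
      simpa using this
    exact ⟨fun a b => by rw [key a, key b]⟩


lemma subsingleton_iff_of_iso {R' : Type} [Ring R'] {A B : ModuleCat.{0} R'} (e : A ≅ B) :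
    Subsingleton A ↔ Subsingleton B := by
  have eq : A ≃ B := ((forget (ModuleCat.{0} R')).mapIso e).toEquiv
  exact ⟨fun h => eq.symm.subsingleton, fun h => eq.subsingleton⟩

def ExtProp (R : MyRes Y) (i : ℕ) (X : ModuleCat.{0} Λ) : Prop :=
  ∀ φ : R.Q (i + 1) ⟶ X, R.d (i + 1) ≫ φ = 0 → ∃ ψ : R.Q i ⟶ X, R.d i ≫ ψ = φ

@[simp] lemma MyRes.res_complex (R : MyRes Y) : R.res.complex = R.cx := rfl

lemma subsingleton_ext_iff (R : MyRes Y) (i : ℕ) (X : ModuleCat.{0} Λ) :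
    Subsingleton (((Ext ℤ (ModuleCat.{0} Λ) (i + 1)).obj (Opposite.op Y)).obj X) ↔
      ExtProp R i X := by
  rw [subsingleton_iff_of_iso (R.res.isoExt (i + 1) X), subsingleton_iff_isZero,
    ← HomologicalComplex.exactAt_iff_isZero_homology,
    HomologicalComplex.exactAt_iff' _ i (i + 1) (i + 2) (by simp) (by simp),
    ShortComplex.moduleCat_exact_iff]
  simp only [HomologicalComplex.sc', HomologicalComplex.shortComplexFunctor',
    ChainComplex.linearYonedaObj_d, MyRes.res_complex,
    ModuleCat.ofHom, id_eq, Linear.leftComp_apply, MyRes.cx_d]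
  rfl

section Constructions

noncomputable def fc (A : ModuleCat.{0} Λ) : ModuleCat.{0} Λ :=
  ModuleCat.of Λ (↑A →₀ Λ)

noncomputable def fcMap (A : ModuleCat.{0} Λ) : fc A ⟶ A :=
  ModuleCat.ofHom (Finsupp.linearCombination Λ (fun a : ↑A => a))

lemma fcMap_surjective (A : ModuleCat.{0} Λ) : Function.Surjective (fcMap A) :=
  fun a => ⟨Finsupp.single a 1, by
    change (Finsupp.linearCombination Λ (fun a : ↑A => a)) (Finsupp.single a 1) = a
    simp⟩

instance fc_projective (A : ModuleCat.{0} Λ) : Projective (fc A) :=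
  ModuleCat.projective_of_free (Finsupp.basisSingleOne)

noncomputable def kerSeq (Y : ModuleCat.{0} Λ) : ℕ → ModuleCat.{0} Λ
  | 0 => Y
  | n + 1 => ModuleCat.of Λ (LinearMap.ker (fcMap (kerSeq Y n)).hom)

lemma exact_sub_comp {A B : ModuleCat.{0} Λ} (g : A ⟶ B)
    {W : ModuleCat.{0} Λ} (u : W ⟶ ModuleCat.of Λ (LinearMap.ker g.hom))
    (hu : Function.Surjective u) :
    Function.Exact ((LinearMap.ker g.hom).subtype.comp (u.hom : W →ₗ[Λ] LinearMap.ker g.hom)) g := by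
  intro y
  constructor
  · intro hy
    obtain ⟨w, hw⟩ := hu ⟨y, hy⟩
    refine ⟨w, ?_⟩
    show ((LinearMap.ker g.hom).subtype) (u w) = y
    rw [hw]
    rfl
  · rintro ⟨w, rfl⟩
    exact (u w).2

noncomputable def myResOf (Y : ModuleCat.{0} Λ) : MyRes Y where
  Q i := fc (kerSeq Y i)
  projQ i := fc_projective _
  d i := ModuleCat.ofHom ((LinearMap.ker (fcMap (kerSeq Y i)).hom).subtype.comp (fcMap (kerSeq Y (i + 1))).hom)
  g := fcMap (kerSeq Y 0)
  surj := fcMap_surjective _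
  exact₀ := exact_sub_comp (fcMap (kerSeq Y 0)) (fcMap (kerSeq Y 1)) (fcMap_surjective _)
  exact i := by
    have h2 : ∀ x : fc (kerSeq Y (i + 1)),
        ((LinearMap.ker (fcMap (kerSeq Y i)).hom).subtype.comp (fcMap (kerSeq Y (i + 1))).hom) x = 0 ↔
          (fcMap (kerSeq Y (i + 1))) x = 0 := by
      intro x
      constructor
      · intro h
        exact Subtype.ext h
      · intro h
        show (LinearMap.ker (fcMap (kerSeq Y i)).hom).subtype ((fcMap (kerSeq Y (i + 1))) x) = 0
        rw [h]
        rfl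
    intro y
    refine (h2 y).trans ?_
    have := exact_sub_comp (fcMap (kerSeq Y (i + 1))) (fcMap (kerSeq Y (i + 2)))
      (fcMap_surjective _) y
    exact this

lemma projective_prod {A B : ModuleCat.{0} Λ} (hA : Projective A) (hB : Projective B) :
    Projective (ModuleCat.of Λ (↑A × ↑B)) := by
  constructor
  intro E Xo φ e he
  obtain ⟨α, hα⟩ := hA.factors (X := Xo) (ModuleCat.ofHom (LinearMap.inl Λ ↑A ↑B) ≫ φ) e
  obtain ⟨β, hβ⟩ := hB.factors (X := Xo) (ModuleCat.ofHom (LinearMap.inr Λ ↑A ↑B) ≫ φ) e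
  refine ⟨ModuleCat.ofHom (α.hom.comp (LinearMap.fst Λ ↑A ↑B) + β.hom.comp (LinearMap.snd Λ ↑A ↑B)), ?_⟩
  apply ModuleCat.hom_ext
  apply LinearMap.ext
  rintro ⟨a, b⟩
  have h1 : e (α a) = φ ((a, 0) : ↑A × ↑B) := by
    simpa using congrArg (fun f => f a) hα
  have h2 : e (β b) = φ ((0, b) : ↑A × ↑B) := by
    simpa using congrArg (fun f => f b) hβ
  have hx : ((a, b) : ↑A × ↑B) = (a, 0) + (0, b) := by simp
  show e ((α.hom.comp (LinearMap.fst Λ ↑A ↑B) + β.hom.comp (LinearMap.snd Λ ↑A ↑B))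
    ((a, b) : ↑A × ↑B)) = φ (a, b)
  have h3 : (α.hom.comp (LinearMap.fst Λ ↑A ↑B) + β.hom.comp (LinearMap.snd Λ ↑A ↑B))
      ((a, b) : ↑A × ↑B) = α a + β b := by simp
  rw [h3, map_add, h1, h2, ← map_add, ← hx]

def wSeq (P : ModuleCat.{0} Λ) : ℕ → ModuleCat.{0} Λ
  | 0 => P
  | _ + 1 => ModuleCat.of Λ PUnit

instance wSeq_subsingleton (P : ModuleCat.{0} Λ) (i : ℕ) :
    Subsingleton ↑(wSeq P (i + 1)) :=
  ⟨fun _ _ => rfl⟩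

instance wSeq_proj (P : ModuleCat.{0} Λ) [hP : Projective P] (i : ℕ) :
    Projective (wSeq P i) := by
  cases i with
  | zero => exact hP
  | succ n =>
      constructor
      intro E Xo f e he
      refine ⟨0, ?_⟩
      ext x
      have hx : x = 0 := Subsingleton.elim _ _
      rw [hx]
      simp

noncomputable def prodRes {T : ModuleCat.{0} Λ} (P : ModuleCat.{0} Λ) [hP : Projective P]
    (R : MyRes T) : MyRes (ModuleCat.of Λ (↑T × ↑P)) where
  Q i := ModuleCat.of Λ (↑(R.Q i) × ↑(wSeq P i))
  projQ i := projective_prod (R.projQ i) (wSeq_proj P i)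
  d i := ModuleCat.ofHom (LinearMap.prodMap (R.d i).hom (0 : wSeq P (i + 1) →ₗ[Λ] wSeq P i))
  g := ModuleCat.ofHom (LinearMap.prodMap R.g.hom (LinearMap.id : ↑P →ₗ[Λ] ↑P))
  surj := by
    rintro ⟨t, p⟩
    obtain ⟨q, hq⟩ := R.surj t
    refine ⟨(q, p), ?_⟩
    show ((R.g q : ↑T), (p : ↑P)) = (t, p)
    rw [hq]
  exact₀ := by
    rintro ⟨t, p⟩
    constructor
    · rintro h
      have h1 : R.g t = 0 := congrArg Prod.fst h
      have h2 : p = 0 := congrArg Prod.snd h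
      obtain ⟨q, hq⟩ := (R.exact₀ t).mp h1
      exact ⟨(q, 0), Prod.ext hq h2.symm⟩
    · rintro ⟨⟨q, w⟩, h⟩
      have h1 : R.d 0 q = t := congrArg Prod.fst h
      have := (R.exact₀ t).mpr ⟨q, h1⟩
      have h2 : (0 : ↑(wSeq P 0)) = p := congrArg Prod.snd h
      refine Prod.ext ?_ ?_
      · exact this
      · exact h2.symm
  exact i := by
    rintro ⟨t, p⟩
    constructor
    · rintro h
      have h1 : R.d i t = 0 := congrArg Prod.fst h
      obtain ⟨q, hq⟩ := ((R.exact i) t).mp h1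
      have h2 : (p : ↑(wSeq P (i+1))) = 0 := Subsingleton.elim _ _
      exact ⟨(q, 0), Prod.ext hq h2.symm⟩
    · rintro ⟨⟨q, w⟩, h⟩
      have h1 : R.d (i + 1) q = t := congrArg Prod.fst h
      have := ((R.exact i) t).mpr ⟨q, h1⟩
      have h2 : (p : ↑(wSeq P (i+1))) = 0 := Subsingleton.elim _ _
      exact Prod.ext (by simpa using this) rfl

lemma prodRes_extProp {T : ModuleCat.{0} Λ} (P : ModuleCat.{0} Λ) [hP : Projective P]
    (R : MyRes T) (i : ℕ) (X : ModuleCat.{0} Λ) (h : ExtProp R i X) :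
    ExtProp (prodRes P R) i X := by
  intro φ hφ
  set φ₁ : R.Q (i + 1) ⟶ X := ModuleCat.ofHom (φ.hom.comp
    (LinearMap.inl Λ _ _)) with hφ₁
  have hφsplit : ∀ z : ↑(R.Q (i+1)) × ↑(wSeq P (i+1)), φ z = φ₁ z.1 := by
    rintro ⟨a, b⟩
    have hb : (b : ↑(wSeq P (i+1))) = 0 := Subsingleton.elim _ _
    rw [hb]
    rfl
  have hc : R.d (i + 1) ≫ φ₁ = 0 := by
    ext x
    have := congrArg (fun f => f ((x, 0) : ↑(R.Q (i+2)) × ↑(wSeq P (i+2)))) hφ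
    exact this
  obtain ⟨ψ₁, hψ₁⟩ := h φ₁ hc
  refine ⟨ModuleCat.ofHom (ψ₁.hom.comp (LinearMap.fst Λ _ _)), ?_⟩
  ext z
  have := congrArg (fun f => f z.1) hψ₁
  exact this.trans (hφsplit z).symm

noncomputable def prepend {T : ModuleCat.{0} Λ} (P : ModuleCat.{0} Λ) (hP : Projective P)
    (f : P ⟶ T) (hs : Function.Surjective f)
    (R : MyRes (ModuleCat.of Λ (LinearMap.ker f.hom))) : MyRes T where
  Q i := match i with
    | 0 => P
    | i + 1 => R.Q i
  projQ i := match i with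
    | 0 => hP
    | i + 1 => R.projQ i
  d i := match i with
    | 0 => ModuleCat.ofHom ((LinearMap.ker f.hom).subtype.comp R.g.hom)
    | i + 1 => R.d i
  g := f
  surj := hs
  exact₀ := exact_sub_comp f R.g R.surj
  exact i := match i with
    | 0 => by
        intro y
        constructor
        · intro hy
          have h0 : R.g y = 0 := Subtype.ext hy
          exact (R.exact₀ y).mp h0
        · rintro ⟨w, rfl⟩
          have h0 : R.g ((R.d 0) w) = 0 := R.exact₀.apply_apply_eq_zero w
          show (LinearMap.ker f.hom).subtype (R.g ((R.d 0) w)) = 0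
          rw [h0]
          simp
    | i + 1 => R.exact i

lemma prepend_extProp_iff {T : ModuleCat.{0} Λ} (P : ModuleCat.{0} Λ) (hP : Projective P)
    (f : P ⟶ T) (hs : Function.Surjective f)
    (R : MyRes (ModuleCat.of Λ (LinearMap.ker f.hom))) (i : ℕ) (X : ModuleCat.{0} Λ) :
    ExtProp (prepend P hP f hs R) (i + 1) X ↔ ExtProp R i X :=
  Iff.rfl

end Constructions

section Vanish

lemma extProp_of_injective {Y X : ModuleCat.{0} Λ} (hX : Injective X) (R : MyRes Y) (i : ℕ) :
    ExtProp R i X := by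
  intro φ hφ
  haveI := hX
  have hker : LinearMap.ker (R.d i).hom ≤
      LinearMap.ker φ.hom := by
    intro x hx
    obtain ⟨z, hz⟩ := ((R.exact i) x).mp hx
    have h0 := congrArg (fun f => f z) hφ
    rw [LinearMap.mem_ker, ← hz]
    exact h0
  set dL : R.Q (i + 1) →ₗ[Λ] R.Q i := (R.d i).hom with hdL
  set e := dL.quotKerEquivRange with he
  set φb : ModuleCat.of Λ ↥(LinearMap.range dL) ⟶ X :=
    ModuleCat.ofHom ((Submodule.liftQ (LinearMap.ker dL) φ.hom hker).comp
      (e.symm : ↥(LinearMap.range dL) →ₗ[Λ] _)) with hφb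
  set ι : ModuleCat.of Λ ↥(LinearMap.range dL) ⟶ R.Q i :=
    ModuleCat.ofHom (LinearMap.range dL).subtype with hι
  haveI : Mono ι := (ModuleCat.mono_iff_injective ι).mpr (Submodule.injective_subtype _)
  refine ⟨Injective.factorThru φb ι, ?_⟩
  ext x
  have hmem : dL x ∈ LinearMap.range dL := ⟨x, rfl⟩
  have h1 : ι ≫ Injective.factorThru φb ι = φb := Injective.comp_factorThru φb ι
  have h2 := congrArg (fun f => f (⟨dL x, hmem⟩ : ↥(LinearMap.range dL))) h1
  have h3 : e.symm ⟨dL x, hmem⟩ = Submodule.Quotient.mk x := by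
    rw [LinearEquiv.symm_apply_eq]
    exact Subtype.ext (dL.quotKerEquivRange_apply_mk x).symm
  show (Injective.factorThru φb ι) (dL x) = φ x
  have h4 : ι (⟨dL x, hmem⟩ : ↥(LinearMap.range dL)) = dL x := rfl
  rw [← h4]
  have h2' : (Injective.factorThru φb ι) (ι (⟨dL x, hmem⟩ : ↥(LinearMap.range dL))) =
      φb (⟨dL x, hmem⟩ : ↥(LinearMap.range dL)) := h2
  rw [h2']
  show (Submodule.liftQ (LinearMap.ker dL) φ.hom hker)
    (e.symm ⟨dL x, hmem⟩) = φ x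
  rw [h3, Submodule.liftQ_apply]

def IDimLE (d : ℕ) (X : ModuleCat.{0} Λ) : Prop :=
  ∃ C, Paper.IsNthCosyz Λ d C X ∧ Injective C

lemma isCosyz_iso_base {C T X' : ModuleCat.{0} Λ} (h : Paper.IsCosyz Λ C T) (e : T ≅ X') :
    Paper.IsCosyz Λ C X' := by
  obtain ⟨I, f, ⟨hI, hf, hess⟩, ⟨ec⟩⟩ := h
  have hretr : ∀ a : ↑X', e.hom (e.inv a) = a := fun a =>
    congrArg (fun g : X' ⟶ X' => g a) e.inv_hom_id
  have hretr2 : ∀ t : ↑T, e.inv (e.hom t) = t := fun t =>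
    congrArg (fun g : T ⟶ T => g t) e.hom_inv_id
  have heinv : Function.Injective e.inv.hom := by
    intro a b hab
    calc a = e.hom (e.inv a) := (hretr a).symm
      _ = e.hom (e.inv b) := by rw [hab]
      _ = b := hretr b
  have hesurj : Function.Surjective e.inv.hom := fun t => ⟨e.hom t, hretr2 t⟩
  have hrange : LinearMap.range (e.inv ≫ f).hom = LinearMap.range f.hom := by
    apply le_antisymm
    · rintro y ⟨x, rfl⟩
      exact ⟨e.inv x, rfl⟩
    · rintro y ⟨t, rfl⟩
      obtain ⟨x, hx⟩ := hesurj t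
      exact ⟨x, by show f (e.inv x) = f t; rw [hx]⟩
  refine ⟨I, e.inv ≫ f, ⟨hI, ?_, ?_⟩, ?_⟩
  · intro a b hab
    exact heinv (hf hab)
  · intro N hN
    rw [hrange] at hN
    exact hess N hN
  · refine ⟨?_⟩
    rw [show LinearMap.range (e.inv ≫ f).hom = LinearMap.range f.hom from hrange]
    exact ec

lemma isNthCosyz_iso {n : ℕ} {C T X' : ModuleCat.{0} Λ} (h : Paper.IsNthCosyz Λ n C T)
    (e : T ≅ X') : Paper.IsNthCosyz Λ n C X' := by
  induction n generalizing C T X' with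
  | zero =>
      obtain ⟨e0⟩ := h
      exact ⟨e0 ≪≫ e⟩
  | succ n ih =>
      obtain ⟨T', hT', hc⟩ := h
      exact ⟨T', ih hT' e, hc⟩

lemma isNthCosyz_peel {n : ℕ} {C X : ModuleCat.{0} Λ} (h : Paper.IsNthCosyz Λ (n + 1) C X) :
    ∃ C1, Paper.IsCosyz Λ C1 X ∧ Paper.IsNthCosyz Λ n C C1 := by
  induction n generalizing C with
  | zero =>
      obtain ⟨T, ⟨eT⟩, hc⟩ := h
      exact ⟨C, isCosyz_iso_base hc eT, ⟨Iso.refl C⟩⟩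
  | succ n ih =>
      obtain ⟨T, hT, hc⟩ := h
      obtain ⟨C1, h1, h2⟩ := ih hT
      exact ⟨C1, h1, ⟨T, h2, hc⟩⟩

lemma idim_peel {d : ℕ} {X : ModuleCat.{0} Λ} (h : IDimLE (d + 1) X) :
    ∃ (I : ModuleCat.{0} Λ) (f : X ⟶ I), Injective I ∧ Function.Injective f ∧
      IDimLE d (ModuleCat.of Λ (↑I ⧸ LinearMap.range f.hom)) := by
  obtain ⟨C, hC, hCi⟩ := h
  obtain ⟨C1, ⟨I, f, ⟨hI, hf, _⟩, ⟨ec⟩⟩, hn⟩ := isNthCosyz_peel hC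
  exact ⟨I, f, hI, hf, ⟨C, isNthCosyz_iso hn ec, hCi⟩⟩

lemma vanish : ∀ (d : ℕ) (X : ModuleCat.{0} Λ), IDimLE d X →
    ∀ {Y : ModuleCat.{0} Λ} (R : MyRes Y) (i : ℕ), d < i + 1 → ExtProp R i X := by
  intro d
  induction d with
  | zero =>
      intro X hX Y R i _
      obtain ⟨C, ⟨e0⟩, hCi⟩ := hX
      exact extProp_of_injective (Injective.of_iso e0 hCi) R i
  | succ d ih =>
      intro X hX Y R i hi
      obtain ⟨I, f, hI, hf, hq⟩ := idim_peel hX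
      obtain ⟨j, rfl⟩ : ∃ j, i = j + 1 := ⟨i - 1, by omega⟩
      intro φ hφ
      -- push into I
      have hc1 : R.d (j + 2) ≫ (φ ≫ f) = 0 := by
        rw [← Category.assoc, hφ, Limits.zero_comp]
      obtain ⟨ψ, hψ⟩ := extProp_of_injective hI R (j + 1) (φ ≫ f) hc1
      set π : I ⟶ ModuleCat.of Λ (↑I ⧸ LinearMap.range f.hom) :=
        ModuleCat.ofHom (LinearMap.range f.hom).mkQ with hπ
      have hfπ : f ≫ π = 0 := by
        ext x
        show Submodule.Quotient.mk (f x) = 0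
        rw [Submodule.Quotient.mk_eq_zero]
        exact ⟨x, rfl⟩
      have hc2 : R.d (j + 1) ≫ (ψ ≫ π) = 0 := by
        rw [← Category.assoc, hψ, Category.assoc, hfπ, Limits.comp_zero]
      obtain ⟨χ, hχ⟩ := ih _ hq R j (by omega) (ψ ≫ π) hc2
      haveI : Epi π := (ModuleCat.epi_iff_surjective π).mpr (Submodule.mkQ_surjective _)
      haveI := R.projQ j
      set χ' : R.Q j ⟶ I := Projective.factorThru χ π with hχ'
      have hχ'2 : χ' ≫ π = χ := Projective.factorThru_comp χ π
      set δ : R.Q (j + 1) ⟶ I := ψ - R.d j ≫ χ' with hδ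
      have hδπ : δ ≫ π = 0 := by
        rw [hδ, Preadditive.sub_comp, Category.assoc, hχ'2, hχ]
        simp
      have hmem : ∀ x : R.Q (j + 1), δ x ∈ LinearMap.range f.hom := by
        intro x
        have h10 : π (δ x) = (0 : ↑(ModuleCat.of Λ (↑I ⧸ LinearMap.range f.hom))) :=
          congrArg (fun g : R.Q (j + 1) ⟶ ModuleCat.of Λ
            (↑I ⧸ LinearMap.range f.hom) => g x) hδπ
        rw [← Submodule.Quotient.mk_eq_zero (LinearMap.range f.hom)]
        exact h10
      set eq1 := LinearEquiv.ofInjective f.hom hf with heq1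
      set θ : R.Q (j + 1) ⟶ X :=
        ModuleCat.ofHom ((eq1.symm : ↥(LinearMap.range f.hom) →ₗ[Λ] X).comp
          (LinearMap.codRestrict (LinearMap.range f.hom) δ.hom hmem))
        with hθ
      have hfθ : ∀ x, f (θ x) = δ x := by
        intro x
        have : eq1 (eq1.symm (⟨δ x, hmem x⟩ : ↥(LinearMap.range f.hom))) =
            ⟨δ x, hmem x⟩ := eq1.apply_symm_apply _
        have h5 := congrArg Subtype.val this
        exact h5
      refine ⟨θ, ?_⟩
      ext x
      have h6 : f ((R.d (j + 1) ≫ θ) x) = f (φ x) := by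
        show f (θ (R.d (j + 1) x)) = f (φ x)
        rw [hfθ]
        have h7 := congrArg (fun g => g x) hψ
        have h8 : (R.d j) ((R.d (j + 1)) x) = 0 := (R.exact j).apply_apply_eq_zero x
        show (ψ - R.d j ≫ χ') ((R.d (j+1)) x) = f (φ x)
        have h9 : (ψ - R.d j ≫ χ') ((R.d (j+1)) x) =
            ψ ((R.d (j+1)) x) - χ' ((R.d j) ((R.d (j+1)) x)) := rfl
        rw [h9, h8]
        simpa using h7
      exact hf h6

end Vanish

section Final

open Opposite

lemma subsingleton_ext_iff_of_iso {A B X : ModuleCat.{0} Λ} (e : A ≅ B) (n : ℕ) :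
    Subsingleton (((Ext ℤ (ModuleCat.{0} Λ) n).obj (op A)).obj X) ↔
      Subsingleton (((Ext ℤ (ModuleCat.{0} Λ) n).obj (op B)).obj X) :=
  subsingleton_iff_of_iso (((Ext ℤ (ModuleCat.{0} Λ) n).mapIso e.symm.op).app X)

lemma subsingleton_ext_of_retract {A B X : ModuleCat.{0} Λ} (i : A ⟶ B) (r : B ⟶ A)
    (h : i ≫ r = 𝟙 A) (n : ℕ)
    (hB : Subsingleton (((Ext ℤ (ModuleCat.{0} Λ) n).obj (op B)).obj X)) :
    Subsingleton (((Ext ℤ (ModuleCat.{0} Λ) n).obj (op A)).obj X) := by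
  set F := Ext ℤ (ModuleCat.{0} Λ) n with hF
  have hcomp : F.map r.op ≫ F.map i.op = 𝟙 (F.obj (op A)) := by
    rw [← F.map_comp, ← op_comp, h, op_id, F.map_id]
  have key : ∀ a : ((F.obj (op A)).obj X),
      ((F.map i.op).app X) (((F.map r.op).app X) a) = a := fun a =>
    congrArg (fun t : F.obj (op A) ⟶ F.obj (op A) => (t.app X) a) hcomp
  haveI := hB
  exact ⟨fun a b => by
    rw [← key a, ← key b,
      Subsingleton.elim (((F.map r.op).app X) a) (((F.map r.op).app X) b)]⟩

lemma oneshift {S T X : ModuleCat.{0} Λ} (h : Paper.IsSyz Λ S T) (i : ℕ) :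
    (Subsingleton (((Ext ℤ (ModuleCat.{0} Λ) (i + 1)).obj (op S)).obj X) ↔
      Subsingleton (((Ext ℤ (ModuleCat.{0} Λ) (i + 2)).obj (op T)).obj X)) := by
  obtain ⟨P, f, ⟨hP, hs, _⟩, ⟨es⟩⟩ := h
  exact (subsingleton_ext_iff_of_iso (X := X) es (i + 1)).trans
    ((subsingleton_ext_iff (myResOf (ModuleCat.of Λ (LinearMap.ker f.hom))) i X).trans
      (((prepend_extProp_iff P hP f hs (myResOf _) i X).symm).trans
        (subsingleton_ext_iff (prepend P hP f hs (myResOf _)) (i + 1) X).symm))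

lemma shift : ∀ (n : ℕ) {S M X : ModuleCat.{0} Λ}, Paper.IsNthSyz Λ n S M → ∀ j : ℕ,
    (Subsingleton (((Ext ℤ (ModuleCat.{0} Λ) (j + 1)).obj (op S)).obj X) ↔
      Subsingleton (((Ext ℤ (ModuleCat.{0} Λ) (n + j + 1)).obj (op M)).obj X)) := by
  intro n
  induction n with
  | zero =>
      intro S M X h j
      obtain ⟨e⟩ := h
      have := subsingleton_ext_iff_of_iso (X := X) e (j + 1)
      rw [show 0 + j + 1 = j + 1 from by omega]
      exact this
  | succ n ih =>
      intro S M X h j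
      obtain ⟨T, hT, hS⟩ := h
      have h1 := oneshift (X := X) hS j
      have h2 := ih (X := X) hT (j + 1)
      rw [show n + (j + 1) + 1 = n + 1 + j + 1 from by omega] at h2
      exact h1.trans ((by exact h2 :
        Subsingleton (((Ext ℤ (ModuleCat.{0} Λ) (j + 2)).obj (op T)).obj X) ↔
        Subsingleton (((Ext ℤ (ModuleCat.{0} Λ) (n + 1 + j + 1)).obj (op M)).obj X)))

lemma idim_of_injDim {X : ModuleCat.{0} Λ} {D : ℕ} (h : Paper.injDim Λ X = (D : ℕ∞)) :
    IDimLE D X := by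
  rw [Paper.injDim] at h
  set s : Set ℕ∞ :=
    {c : ℕ∞ | ∃ n : ℕ, c = n ∧ ∃ C, Paper.IsNthCosyz Λ n C X ∧ Injective C} with hs
  have hne : s.Nonempty := by
    rw [Set.nonempty_iff_ne_empty]
    intro h0
    rw [h0, sInf_empty] at h
    exact (WithTop.coe_ne_top (a := D)) h.symm
  obtain ⟨m, hm, hmin⟩ := (wellFounded_lt (α := ℕ∞)).has_min s hne
  have hlb : ∀ b ∈ s, m ≤ b := fun b hb => not_lt.mp (hmin b hb)
  have hmeq : m = (D : ℕ∞) := by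
    rw [← h]
    exact le_antisymm (le_sInf hlb) (sInf_le hm)
  obtain ⟨n0, hn0, C, hC, hCi⟩ := hm
  have : (n0 : ℕ∞) = (D : ℕ∞) := by rw [← hn0, hmeq]
  have hn0D : n0 = D := by exact_mod_cast this
  exact ⟨C, by rw [← hn0D]; exact hC, hCi⟩

lemma main {k : ℕ} (hk : 1 ≤ k) {M : ModuleCat.{0} Λ} {n : ℕ}
    (h : Paper.kdellLE Λ k M n) : Paper.kedellLE Λ k M n := by
  obtain ⟨S, N, T, hN, hS, hT, U, Pp, hPp, ⟨e⟩⟩ := h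
  intro X _ k' hk' hid
  obtain ⟨k2, rfl⟩ : ∃ k2, k' = k2 + 1 := ⟨k' - 1, by omega⟩
  have hD := idim_of_injDim (D := n + (k - 1) + (k2 + 1)) hid
  have hvan : ExtProp (myResOf N) (n + k + k2) X :=
    vanish _ X hD (myResOf N) (n + k + k2) (by omega)
  have hN1 : Subsingleton (((Ext ℤ (ModuleCat.{0} Λ) (n + k + k2 + 1)).obj (op N)).obj X) :=
    (subsingleton_ext_iff (myResOf N) (n + k + k2) X).mpr hvan
  have hT1 := shift (n + k) hT (X := X) k2
  have hTsub : Subsingleton (((Ext ℤ (ModuleCat.{0} Λ) (k2 + 1)).obj (op T)).obj X) :=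
    hT1.mpr (by rw [show n + k + k2 + 1 = n + k + k2 + 1 from rfl]; exact hN1)
  haveI := hPp
  have hProd : Subsingleton (((Ext ℤ (ModuleCat.{0} Λ) (k2 + 1)).obj
      (op (ModuleCat.of Λ (↑T × ↑Pp)))).obj X) :=
    (subsingleton_ext_iff (prodRes Pp (myResOf T)) k2 X).mpr
      (prodRes_extProp Pp (myResOf T) k2 X
        ((subsingleton_ext_iff (myResOf T) k2 X).mp hTsub))
  set ι : S ⟶ ModuleCat.of Λ (↑T × ↑Pp) :=
    ModuleCat.ofHom (LinearMap.inl Λ ↑S ↑U) ≫ e.hom with hι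
  set r : ModuleCat.of Λ (↑T × ↑Pp) ⟶ S :=
    e.inv ≫ ModuleCat.ofHom (LinearMap.fst Λ ↑S ↑U) with hr
  have hretr : ι ≫ r = 𝟙 S := by
    ext x
    have h1 : ∀ z : ↑(ModuleCat.of Λ (↑S × ↑U)), e.inv (e.hom z) = z := fun z =>
      congrArg (fun g : ModuleCat.of Λ (↑S × ↑U) ⟶ ModuleCat.of Λ (↑S × ↑U) => g z)
        e.hom_inv_id
    show (LinearMap.fst Λ ↑S ↑U) (e.inv (e.hom ((LinearMap.inl Λ ↑S ↑U) x))) = x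
    rw [h1]
    rfl
  have hSsub : Subsingleton (((Ext ℤ (ModuleCat.{0} Λ) (k2 + 1)).obj (op S)).obj X) :=
    subsingleton_ext_of_retract ι r hretr (k2 + 1) hProd
  have hfin := (shift n hS (X := X) k2).mp hSsub
  rw [show n + k2 + 1 = n + (k2 + 1) from by omega] at hfin
  exact hfin

end Final

end Aux5

/-- `k-edell M ≤ k-dell M` for every finitely generated module `M` and `k ≥ 1`. -/
theorem statement5 (K Λ : Type) [Field K] [Ring Λ] [Algebra K Λ] [FiniteDimensional K Λ]
    (k : ℕ) (hk : 1 ≤ k) (M : ModuleCat.{0} Λ) (hM : Module.Finite Λ M) :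
    Paper.kedell Λ k M ≤ Paper.kdell Λ k M := by
  rw [Paper.kedell, Paper.kdell]
  apply le_sInf
  rintro c ⟨n, rfl, h⟩
  exact sInf_le ⟨n, rfl, Aux5.main hk h⟩
end

section
/- Let Λ be a finite dimensional algebra over a field. Then Findim Λ^op ≤ sub-ddell Λ ≤ dell Λ, where sub-ddell Λ = sup over simple modules S of inf { dell N : S embeds into N }. -/
open CategoryTheory

namespace Paper

lemma enat_sInf_mem {S : Set ℕ∞} (h : sInf S ≠ ⊤) : sInf S ∈ S := by
  set A : Set ℕ := {k : ℕ | (k : ℕ∞) ∈ S} with hA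
  rcases A.eq_empty_or_nonempty with he | hne
  · exfalso; apply h
    rw [sInf_eq_top]
    intro a ha
    cases a with
    | top => rfl
    | coe k => exact absurd ha (by simp [hA] at he ⊢; exact Set.eq_empty_iff_forall_notMem.mp he k)
  · have hmem : ((sInf A : ℕ) : ℕ∞) ∈ S := Nat.sInf_mem hne
    have : sInf S = ((sInf A : ℕ) : ℕ∞) := by
      apply le_antisymm (sInf_le hmem)
      apply le_sInf
      intro b hb
      cases b with
      | top => exact le_top
      | coe k => exact_mod_cast Nat.sInf_le hb
    rw [this]; exact hmem

section
variable (Λ : Type) [Ring Λ]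

structure Chain (n : ℕ) (X C : ModuleCat.{0} Λ) where
  Z : ℕ → ModuleCat.{0} Λ
  I : ℕ → ModuleCat.{0} Λ
  e : ∀ j, Z j ⟶ I j
  r : ∀ j, I j ⟶ Z (j + 1)
  z0 : Z 0 = X
  topIso : Nonempty (Z n ≅ C)
  env : ∀ j, j < n → IsInjEnv Λ (e j)
  rsurj : ∀ j, j < n → Function.Surjective (r j)
  ex : ∀ j, j < n → LinearMap.ker (r j).hom = LinearMap.range (e j).hom
  cos : ∀ j, j ≤ n → IsNthCosyz Λ j (Z j) X

def D1 {n : ℕ} {X C : ModuleCat.{0} Λ} (ch : Chain Λ n X C) (j : ℕ)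
    (A : ModuleCat.{0} Λ) : Prop :=
  ∀ h : A ⟶ ch.Z (j+1), ∃ l : A ⟶ ch.I j, l ≫ ch.r j = h

variable {Λ}
variable {n : ℕ} {X C : ModuleCat.{0} Λ} (ch : Chain Λ n X C)

lemma factor_through_surj {A B Z : ModuleCat.{0} Λ} (q : A ⟶ B) (hq : Function.Surjective q)
    (φ : A ⟶ Z) (hφ : ∀ x, q x = 0 → φ x = 0) : ∃ ψ : B ⟶ Z, q ≫ ψ = φ := by
  have hle : LinearMap.ker q.hom ≤ LinearMap.ker φ.hom := fun x hx => hφ x hx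
  let E := LinearMap.quotKerEquivOfSurjective q.hom hq
  refine ⟨ModuleCat.ofHom (((LinearMap.ker q.hom).liftQ φ.hom hle).comp (E.symm : B →ₗ[Λ] _)), ?_⟩
  ext x
  have hE : E.symm (q x) = Submodule.Quotient.mk x := by
    apply E.injective
    rw [LinearEquiv.apply_symm_apply]
    rfl
  simp [LinearMap.comp_apply, hE]

lemma corestrict_range {Q I Z : ModuleCat.{0} Λ} (e : Z ⟶ I) (he : Function.Injective e)
    (D : Q ⟶ I) (hD : ∀ x, D x ∈ LinearMap.range e.hom) : ∃ G : Q ⟶ Z, G ≫ e = D := by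
  let Eq := LinearEquiv.ofInjective e.hom he
  refine ⟨ModuleCat.ofHom ((Eq.symm : _ →ₗ[Λ] Z).comp (D.hom.codRestrict (LinearMap.range e.hom) hD)), ?_⟩
  ext x
  have : e (Eq.symm ⟨D x, hD x⟩) = (⟨D x, hD x⟩ : LinearMap.range e.hom) := by
    have h2 := Eq.apply_symm_apply ⟨D x, hD x⟩
    calc e (Eq.symm ⟨D x, hD x⟩) = (Eq (Eq.symm ⟨D x, hD x⟩) : I) := by
            rw [LinearEquiv.ofInjective_apply]
      _ = _ := by rw [h2]
  exact this

lemma hom_inv_apply {A B : ModuleCat.{0} Λ} (iso : A ≅ B) (x : B) : iso.hom (iso.inv x) = x := by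
  simp

lemma inv_hom_apply {A B : ModuleCat.{0} Λ} (iso : A ≅ B) (x : A) : iso.inv (iso.hom x) = x := by
  simp

lemma proj_D1 {j : ℕ} (hj : j < n) {P : ModuleCat.{0} Λ} (hP : Projective P) : D1 Λ ch j P := by
  intro h
  haveI := hP
  haveI : Epi (ch.r j) := (ModuleCat.epi_iff_surjective _).mpr (ch.rsurj j hj)
  refine ⟨Projective.factorThru h (ch.r j), ?_⟩
  exact Projective.factorThru_comp _ _

lemma iso_D1 {j : ℕ} {A B : ModuleCat.{0} Λ} (iso : A ≅ B) (hA : D1 Λ ch j A) :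
    D1 Λ ch j B := by
  intro h
  obtain ⟨l, hl⟩ := hA (iso.hom ≫ h)
  refine ⟨iso.inv ≫ l, ?_⟩
  ext x
  show (ch.r j) (l (iso.inv x)) = h x
  calc (ch.r j) (l (iso.inv x)) = h (iso.hom (iso.inv x)) := ConcreteCategory.congr_hom hl (iso.inv x)
    _ = h x := by rw [hom_inv_apply]

lemma sum_transfer {j : ℕ} (hj : j < n) {S' T : ModuleCat.{0} Λ}
    (hsum : SummandUpToProj Λ S' T) (hT : D1 Λ ch j T) : D1 Λ ch j S' := by
  intro h
  obtain ⟨X₀, P, hP, ⟨iso⟩⟩ := hsum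
  let H : ModuleCat.of Λ (S' × X₀) ⟶ ch.Z (j+1) := ModuleCat.ofHom (LinearMap.fst Λ S' X₀) ≫ h
  let H' : ModuleCat.of Λ (T × P) ⟶ ch.Z (j+1) := iso.inv ≫ H
  obtain ⟨lT, hlT⟩ := hT (ModuleCat.ofHom (LinearMap.inl Λ T P) ≫ H')
  obtain ⟨lP, hlP⟩ := proj_D1 ch hj hP (ModuleCat.ofHom (LinearMap.inr Λ T P) ≫ H')
  let L : ModuleCat.of Λ (T × P) ⟶ ch.I j :=
    ModuleCat.ofHom (LinearMap.fst Λ T P) ≫ lT + ModuleCat.ofHom (LinearMap.snd Λ T P) ≫ lP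
  have hL : L ≫ ch.r j = H' := by
    apply ModuleCat.hom_ext; apply LinearMap.ext; intro x
    show (ch.r j) (lT x.1 + lP x.2) = H' x
    have h1 : (ch.r j) (lT x.1) = H' ((LinearMap.inl Λ T P) x.1) :=
      ConcreteCategory.congr_hom hlT x.1
    have h2 : (ch.r j) (lP x.2) = H' ((LinearMap.inr Λ T P) x.2) :=
      ConcreteCategory.congr_hom hlP x.2
    rw [map_add, h1, h2, ← map_add]
    congr 1
    show ((x.1, 0) : ↑T × ↑P) + ((0, x.2) : ↑T × ↑P) = x
    rw [Prod.mk_add_mk, add_zero, zero_add]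
  refine ⟨ModuleCat.ofHom (LinearMap.inl Λ S' X₀) ≫ iso.hom ≫ L, ?_⟩
  ext s
  show (ch.r j) (L (iso.hom ((LinearMap.inl Λ S' X₀) s))) = h s
  calc (ch.r j) (L (iso.hom ((LinearMap.inl Λ S' X₀) s)))
      = H (iso.inv (iso.hom ((LinearMap.inl Λ S' X₀) s))) := ConcreteCategory.congr_hom hL _
    _ = H ((LinearMap.inl Λ S' X₀) s) := by rw [inv_hom_apply]
    _ = h s := rfl


lemma base_lemma {j : ℕ} (hj : j + 1 = n) (hZn : Injective (ch.Z n)) {T A : ModuleCat.{0} Λ}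
    (hsyz : IsSyz Λ T A) : D1 Λ ch j T := by
  subst hj
  obtain ⟨Q, q, ⟨hQproj, hqsurj, -⟩, ⟨iso⟩⟩ := hsyz
  intro h
  set K := ModuleCat.of Λ (LinearMap.ker q.hom) with hK
  let ι : K ⟶ Q := ModuleCat.ofHom (LinearMap.ker q.hom).subtype
  haveI : Mono ι := (ModuleCat.mono_iff_injective _).mpr (Submodule.injective_subtype _)
  haveI := hZn
  haveI := hQproj
  haveI : Epi (ch.r j) := (ModuleCat.epi_iff_surjective _).mpr (ch.rsurj j (Nat.lt_succ_self j))
  let ht : K ⟶ ch.Z (j+1) := iso.inv ≫ h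
  let H : Q ⟶ ch.Z (j+1) := Injective.factorThru ht ι
  let L : Q ⟶ ch.I j := Projective.factorThru H (ch.r j)
  have h1 : L ≫ ch.r j = H := Projective.factorThru_comp _ _
  have h2 : ι ≫ H = ht := Injective.comp_factorThru _ _
  refine ⟨iso.hom ≫ ι ≫ L, ?_⟩
  ext x
  show (ch.r j) (L (ι (iso.hom x))) = h x
  calc (ch.r j) (L (ι (iso.hom x))) = H (ι (iso.hom x)) := ConcreteCategory.congr_hom h1 _
    _ = ht (iso.hom x) := ConcreteCategory.congr_hom h2 _
    _ = h (iso.inv (iso.hom x)) := rfl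
    _ = h x := by rw [inv_hom_apply]

lemma down_lemma {j : ℕ} (hj : j + 2 ≤ n) {T' T : ModuleCat.{0} Λ}
    (hsyz : IsSyz Λ T' T) (hT : D1 Λ ch (j+1) T) : D1 Λ ch j T' := by
  obtain ⟨Q, q, ⟨hQproj, hqsurj, -⟩, ⟨iso⟩⟩ := hsyz
  intro h
  set K := ModuleCat.of Λ (LinearMap.ker q.hom) with hK
  let ι : K ⟶ Q := ModuleCat.ofHom (LinearMap.ker q.hom).subtype
  haveI : Mono ι := (ModuleCat.mono_iff_injective _).mpr (Submodule.injective_subtype _)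
  haveI := hQproj
  have henv1 := ch.env (j+1) (by omega)
  haveI : Injective (ch.I (j+1)) := henv1.1
  haveI : Epi (ch.r j) := (ModuleCat.epi_iff_surjective _).mpr (ch.rsurj j (by omega))
  let ht : K ⟶ ch.Z (j+1) := iso.inv ≫ h
  let g : K ⟶ ch.I (j+1) := ht ≫ ch.e (j+1)
  let H : Q ⟶ ch.I (j+1) := Injective.factorThru g ι
  have h2 : ι ≫ H = g := Injective.comp_factorThru _ _
  let φ : Q ⟶ ch.Z (j+2) := H ≫ ch.r (j+1)
  have hφ : ∀ x, q x = 0 → φ x = 0 := by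
    intro x hx
    have hxK : x ∈ LinearMap.ker q.hom := hx
    have hHx : H x = g ⟨x, hxK⟩ := ConcreteCategory.congr_hom h2 ⟨x, hxK⟩
    show (ch.r (j+1)) (H x) = 0
    rw [hHx]
    show (ch.r (j+1)) ((ch.e (j+1)) (ht ⟨x, hxK⟩)) = 0
    have : (ch.e (j+1)) (ht ⟨x, hxK⟩) ∈ LinearMap.ker (ch.r (j+1)).hom := by
      rw [ch.ex (j+1) (by omega)]
      exact ⟨ht ⟨x, hxK⟩, rfl⟩
    exact this
  obtain ⟨ψ, hψ⟩ := factor_through_surj q hqsurj φ hφ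
  obtain ⟨l, hl⟩ := hT ψ
  let D : Q ⟶ ch.I (j+1) := H - q ≫ l
  have hD : ∀ x, D x ∈ LinearMap.range (ch.e (j+1)).hom := by
    intro x
    rw [← ch.ex (j+1) (by omega)]
    show (ch.r (j+1)) (H x - l (q x)) = 0
    rw [map_sub]
    have hψx : ψ (q x) = φ x := ConcreteCategory.congr_hom hψ x
    have hlx : (ch.r (j+1)) (l (q x)) = ψ (q x) := ConcreteCategory.congr_hom hl (q x)
    rw [hlx, hψx]
    show (ch.r (j+1)) (H x) - (ch.r (j+1)) (H x) = 0
    exact sub_self _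
  obtain ⟨G, hG⟩ := corestrict_range (ch.e (j+1)) henv1.2.1 D hD
  have hGι : ∀ k : K, G (ι k) = ht k := by
    intro k
    apply henv1.2.1
    have hek : (ch.e (j+1)) (G (ι k)) = D (ι k) := ConcreteCategory.congr_hom hG (ι k)
    rw [hek]
    show H (ι k) - l (q (ι k)) = (ch.e (j+1)) (ht k)
    have hqι : q (ι k) = 0 := k.2
    rw [hqι, map_zero, sub_zero]
    exact ConcreteCategory.congr_hom h2 k
  let L : Q ⟶ ch.I j := Projective.factorThru G (ch.r j)
  have h3 : L ≫ ch.r j = G := Projective.factorThru_comp _ _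
  refine ⟨iso.hom ≫ ι ≫ L, ?_⟩
  ext x
  show (ch.r j) (L (ι (iso.hom x))) = h x
  calc (ch.r j) (L (ι (iso.hom x))) = G (ι (iso.hom x)) := ConcreteCategory.congr_hom h3 _
    _ = ht (iso.hom x) := hGι _
    _ = h (iso.inv (iso.hom x)) := rfl
    _ = h x := by rw [inv_hom_apply]

lemma up_lemma {j : ℕ} (hj : j + 2 ≤ n) {S'' T : ModuleCat.{0} Λ}
    (hsyz : IsSyz Λ S'' T) (hS : D1 Λ ch j S'') : D1 Λ ch (j+1) T := by
  obtain ⟨Q, q, ⟨hQproj, hqsurj, -⟩, ⟨iso⟩⟩ := hsyz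
  intro h
  set K := ModuleCat.of Λ (LinearMap.ker q.hom) with hK
  let ι : K ⟶ Q := ModuleCat.ofHom (LinearMap.ker q.hom).subtype
  haveI : Mono ι := (ModuleCat.mono_iff_injective _).mpr (Submodule.injective_subtype _)
  haveI := hQproj
  have henv1 := ch.env (j+1) (by omega)
  have henv0 := ch.env j (by omega)
  haveI : Injective (ch.I j) := henv0.1
  haveI : Epi (ch.r (j+1)) := (ModuleCat.epi_iff_surjective _).mpr (ch.rsurj (j+1) (by omega))
  let H : Q ⟶ ch.I (j+1) := Projective.factorThru (q ≫ h) (ch.r (j+1))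
  have h1 : H ≫ ch.r (j+1) = q ≫ h := Projective.factorThru_comp _ _
  have hHι : ∀ k : K, H (ι k) ∈ LinearMap.range (ch.e (j+1)).hom := by
    intro k
    rw [← ch.ex (j+1) (by omega)]
    show (ch.r (j+1)) (H (ι k)) = 0
    calc (ch.r (j+1)) (H (ι k)) = h (q (ι k)) := ConcreteCategory.congr_hom h1 (ι k)
      _ = h 0 := by rw [show q (ι k) = 0 from k.2]
      _ = 0 := map_zero _
  obtain ⟨g, hg⟩ := corestrict_range (ch.e (j+1)) henv1.2.1 (ι ≫ H)
    (fun k => hHι k)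
  obtain ⟨l, hl⟩ := hS (iso.hom ≫ g)
  let lt : K ⟶ ch.I j := iso.inv ≫ l
  have hlt : ∀ k : K, (ch.r j) (lt k) = g k := by
    intro k
    calc (ch.r j) (l (iso.inv k)) = g (iso.hom (iso.inv k)) := ConcreteCategory.congr_hom hl _
      _ = g k := by rw [hom_inv_apply]
  let L : Q ⟶ ch.I j := Injective.factorThru lt ι
  have h2 : ι ≫ L = lt := Injective.comp_factorThru _ _
  let G : Q ⟶ ch.Z (j+1) := L ≫ ch.r j
  have hGι : ∀ k : K, G (ι k) = g k := by
    intro k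
    show (ch.r j) (L (ι k)) = g k
    have : L (ι k) = lt k := ConcreteCategory.congr_hom h2 k
    rw [this]
    exact hlt k
  let Dm : Q ⟶ ch.I (j+1) := H - G ≫ ch.e (j+1)
  have hDm : ∀ x, q x = 0 → Dm x = 0 := by
    intro x hx
    have hxK : x ∈ LinearMap.ker q.hom := hx
    show H x - (ch.e (j+1)) (G x) = 0
    have hx1 : H x = H (ι (⟨x, hxK⟩ : LinearMap.ker q.hom)) := rfl
    have hx2 : G x = G (ι (⟨x, hxK⟩ : LinearMap.ker q.hom)) := rfl
    rw [hx1, hx2, hGι]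
    show H (ι ⟨x, hxK⟩) - (ch.e (j+1)) (g ⟨x, hxK⟩) = 0
    rw [sub_eq_zero]
    exact (ConcreteCategory.congr_hom hg (⟨x, hxK⟩ : LinearMap.ker q.hom)).symm
  obtain ⟨l', hl'⟩ := factor_through_surj q hqsurj Dm hDm
  refine ⟨l', ?_⟩
  ext y
  obtain ⟨x, rfl⟩ := hqsurj y
  show (ch.r (j+1)) (l' (q x)) = h (q x)
  have : l' (q x) = Dm x := ConcreteCategory.congr_hom hl' x
  rw [this]
  show (ch.r (j+1)) (H x - (ch.e (j+1)) (G x)) = h (q x)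
  rw [map_sub]
  have he0 : (ch.r (j+1)) ((ch.e (j+1)) (G x)) = 0 := by
    have : (ch.e (j+1)) (G x) ∈ LinearMap.ker (ch.r (j+1)).hom := by
      rw [ch.ex (j+1) (by omega)]
      exact ⟨G x, rfl⟩
    exact this
  have hH : (ch.r (j+1)) (H x) = h (q x) := ConcreteCategory.congr_hom h1 x
  rw [he0, hH, sub_zero]


lemma P_lemma (hZn : Injective (ch.Z n)) :
    ∀ s : ℕ, s + 1 ≤ n → ∀ (A T : ModuleCat.{0} Λ), IsNthSyz Λ (s+1) T A →
      D1 Λ ch (n - s - 1) T := by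
  intro s
  induction s with
  | zero =>
    rintro hs A T ⟨T₀, -, hsyz⟩
    exact base_lemma ch (by omega) hZn hsyz
  | succ s ih =>
    rintro hs A T' ⟨T, hT, hsyz⟩
    have hD : D1 Λ ch (n - s - 1) T := ih (by omega) A T hT
    have hD' : D1 Λ ch ((n - s - 2) + 1) T := by
      rw [show (n - s - 2) + 1 = n - s - 1 from by omega]
      exact hD
    have := down_lemma ch (j := n - s - 2) (by omega) hsyz hD'
    rw [show n - (s+1) - 1 = n - s - 2 from by omega]
    exact this

lemma Q_lemma : ∀ m : ℕ, m + 1 ≤ n → ∀ (N S'' : ModuleCat.{0} Λ), IsNthSyz Λ m S'' N →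
    D1 Λ ch (n - m - 1) S'' → D1 Λ ch (n - 1) N := by
  intro m
  induction m with
  | zero =>
    rintro hm N S'' ⟨iso⟩ hD
    exact iso_D1 ch iso hD
  | succ m ih =>
    rintro hm N S'' ⟨T, hT, hsyz⟩ hD
    have hD' : D1 Λ ch (n - m - 2) S'' := by
      rw [show n - m - 2 = n - (m+1) - 1 from by omega]
      exact hD
    have hup := up_lemma ch (j := n - m - 2) (by omega) hsyz hD'
    have hupT : D1 Λ ch (n - m - 1) T := by
      rw [show n - m - 1 = (n - m - 2) + 1 from by omega]
      exact hup
    exact ih (by omega) N T hT hupT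

lemma main_D1 {N : ModuleCat.{0} Λ} (m₀ : ℕ) (hm : m₀ < n) (hZn : Injective (ch.Z n))
    (hk : kdellLE Λ 1 N m₀) : D1 Λ ch (n - 1) N := by
  obtain ⟨S', N', T, -, hS', hT, hsum⟩ := hk
  have h1 : D1 Λ ch (n - m₀ - 1) T := P_lemma ch hZn m₀ (by omega) N' T hT
  have h2 : D1 Λ ch (n - m₀ - 1) S' := sum_transfer ch (by omega) hsum h1
  exact Q_lemma ch m₀ (by omega) N S' hS' h2


lemma cosyz_succ {X I₀ : ModuleCat.{0} Λ} (f : X ⟶ I₀) (hf : IsInjEnv Λ f) :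
    ∀ (j : ℕ) (D : ModuleCat.{0} Λ),
      IsNthCosyz Λ j D (ModuleCat.of Λ (I₀ ⧸ LinearMap.range f.hom)) → IsNthCosyz Λ (j+1) D X := by
  intro j
  induction j with
  | zero => intro D h; exact ⟨X, ⟨Iso.refl X⟩, ⟨I₀, f, hf, h⟩⟩
  | succ j ih =>
    rintro D ⟨T, hT, hD⟩
    exact ⟨T, ih T hT, hD⟩

lemma cosyz_peel : ∀ (n : ℕ) (C X : ModuleCat.{0} Λ), IsNthCosyz Λ (n+1) C X →
    ∃ (I₀ : ModuleCat.{0} Λ) (f : X ⟶ I₀), IsInjEnv Λ f ∧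
      IsNthCosyz Λ n C (ModuleCat.of Λ (I₀ ⧸ LinearMap.range f.hom)) := by
  intro n
  induction n with
  | zero =>
    rintro C X ⟨T, ⟨iso⟩, I₀, g, henv, hiso⟩
    refine ⟨I₀, iso.inv ≫ g, ?_, ?_⟩
    · have hinvinj : Function.Injective iso.inv := (iso.toLinearEquiv).symm.injective
      have hinvsurj : Function.Surjective iso.inv := (iso.toLinearEquiv).symm.surjective
      have hrange : LinearMap.range (iso.inv ≫ g).hom = LinearMap.range g.hom := by
        rw [ModuleCat.hom_comp, LinearMap.range_comp, LinearMap.range_eq_top.mpr hinvsurj,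
          Submodule.map_top]
      refine ⟨henv.1, ?_, ?_⟩
      · exact henv.2.1.comp hinvinj
      · rw [hrange]; exact henv.2.2
    · have hrange : LinearMap.range (iso.inv ≫ g).hom = LinearMap.range g.hom := by
        have hinvsurj : Function.Surjective iso.inv := (iso.toLinearEquiv).symm.surjective
        rw [ModuleCat.hom_comp, LinearMap.range_comp, LinearMap.range_eq_top.mpr hinvsurj,
          Submodule.map_top]
      rw [hrange]
      exact hiso
  | succ n ih =>
    rintro C X ⟨T, hT, hCT⟩
    obtain ⟨I₀, f, henv, h₁⟩ := ih T X hT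
    exact ⟨I₀, f, henv, T, h₁, hCT⟩


lemma eqToHom_bij {A B : ModuleCat.{0} Λ} (h : A = B) : Function.Bijective (eqToHom h) := by
  subst h; simpa using Function.bijective_id

lemma chain_exists : ∀ (n : ℕ) (C X : ModuleCat.{0} Λ), IsNthCosyz Λ n C X →
    Nonempty (Chain Λ n X C) := by
  intro n
  induction n with
  | zero =>
    rintro C X ⟨iso⟩
    refine ⟨{ Z := fun _ => X
              I := fun _ => X
              e := fun _ => 0
              r := fun _ => 0
              z0 := rfl
              topIso := ⟨iso.symm⟩
              env := fun j hj => absurd hj (Nat.not_lt_zero j)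
              rsurj := fun j hj => absurd hj (Nat.not_lt_zero j)
              ex := fun j hj => absurd hj (Nat.not_lt_zero j)
              cos := fun j hj => ?_ }⟩
    obtain rfl : j = 0 := Nat.le_zero.mp hj
    exact ⟨Iso.refl X⟩
  | succ n ih =>
    intro C X hc
    obtain ⟨I₀, f, henv, h₁⟩ := cosyz_peel n C X hc
    obtain ⟨ch⟩ := ih C _ h₁
    set X₁ := ModuleCat.of Λ (I₀ ⧸ LinearMap.range f.hom) with hX₁
    let m : I₀ ⟶ X₁ := ModuleCat.ofHom (LinearMap.range f.hom).mkQ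
    let q₀ : I₀ ⟶ ch.Z 0 := m ≫ eqToHom ch.z0.symm
    have hq₀surj : Function.Surjective q₀ := by
      exact (eqToHom_bij ch.z0.symm).2.comp (Submodule.mkQ_surjective _)
    have hq₀ker : LinearMap.ker q₀.hom = LinearMap.range f.hom := by
      show LinearMap.ker (m ≫ eqToHom ch.z0.symm).hom = LinearMap.range f.hom
      rw [ModuleCat.hom_comp, LinearMap.ker_comp,
        LinearMap.ker_eq_bot.mpr (eqToHom_bij ch.z0.symm).1]
      show Submodule.comap (LinearMap.range f.hom).mkQ ⊥ = LinearMap.range f.hom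
      rw [← LinearMap.ker, Submodule.ker_mkQ]
    refine ⟨{ Z := fun j => (match j with | 0 => X | (j+1) => ch.Z j)
              I := fun j => (match j with | 0 => I₀ | (j+1) => ch.I j)
              e := fun j => (match j with | 0 => f | (j+1) => ch.e j)
              r := fun j => (match j with | 0 => q₀ | (j+1) => ch.r j)
              z0 := rfl
              topIso := ch.topIso
              env := fun j hj => ?_
              rsurj := fun j hj => ?_
              ex := fun j hj => ?_
              cos := fun j hj => ?_ }⟩
    · match j with
      | 0 => exact henv
      | (j+1) => exact ch.env j (Nat.lt_of_succ_lt_succ hj)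
    · match j with
      | 0 => exact hq₀surj
      | (j+1) => exact ch.rsurj j (Nat.lt_of_succ_lt_succ hj)
    · match j with
      | 0 =>
        show LinearMap.ker q₀.hom = LinearMap.range f.hom
        exact hq₀ker
      | (j+1) => exact ch.ex j (Nat.lt_of_succ_lt_succ hj)
    · match j with
      | 0 => exact ⟨Iso.refl X⟩
      | (j+1) => exact cosyz_succ f henv j _ (ch.cos j (Nat.le_of_succ_le_succ hj))

lemma finite_of_isSimpleModule {Λ : Type} [Ring Λ] {M : Type} [AddCommGroup M] [Module Λ M]
    (h : IsSimpleModule Λ M) : Module.Finite Λ M := by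
  haveI := h
  obtain ⟨x, -, hx⟩ := (Submodule.ne_bot_iff (⊤ : Submodule Λ M)).mp
    (Ne.symm IsSimpleOrder.bot_ne_top)
  have hspan : Submodule.span Λ {x} = ⊤ := by
    rcases eq_bot_or_eq_top (Submodule.span Λ {x}) with hb | ht
    · exact absurd (Submodule.span_singleton_eq_bot.mp hb) hx
    · exact ht
  exact ⟨⟨{x}, by simpa using hspan⟩⟩

end
end Paper

/-- `Findim Λᵒᵖ ≤ sub-ddell Λ ≤ dell Λ`. -/
theorem statement10 (K Λ : Type) [Field K] [Ring Λ] [Algebra K Λ] [FiniteDimensional K Λ] :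
    Paper.findimOp Λ ≤ Paper.subddellAlg Λ ∧ Paper.subddellAlg Λ ≤ Paper.dellAlg Λ := by
  constructor
  · -- Findim Λᵒᵖ ≤ sub-ddell Λ
    apply sSup_le
    rintro c ⟨Xm, hXfin, hinj, hne⟩
    obtain ⟨n₀, rfl⟩ := WithTop.ne_top_iff_exists.mp hne
    rcases Nat.eq_zero_or_pos n₀ with rfl | hpos
    · simp; exact bot_le
    obtain ⟨n', rfl⟩ : ∃ n', n₀ = n' + 1 := ⟨n₀ - 1, by omega⟩
    clear hne hpos
    -- injDim is attained
    have hS : sInf {c : ℕ∞ | ∃ n : ℕ, c = n ∧ ∃ C, Paper.IsNthCosyz Λ n C Xm ∧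
        CategoryTheory.Injective C} = ((n' + 1 : ℕ) : ℕ∞) := hinj
    have h1 : ((n' + 1 : ℕ) : ℕ∞) ∈ {c : ℕ∞ | ∃ n : ℕ, c = n ∧ ∃ C, Paper.IsNthCosyz Λ n C Xm ∧
        CategoryTheory.Injective C} := by
      rw [← hS]
      exact Paper.enat_sInf_mem (by rw [hS]; exact WithTop.coe_ne_top)
    obtain ⟨n₁, hn₁, C, hcosC, hCinj⟩ := h1
    obtain rfl : n₁ = n' + 1 := by exact_mod_cast hn₁.symm
    -- minimality
    have hminI : ∀ C', Paper.IsNthCosyz Λ n' C' Xm → ¬ CategoryTheory.Injective C' := by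
      intro C' hC' hInj
      have hle : sInf {c : ℕ∞ | ∃ n : ℕ, c = n ∧ ∃ C, Paper.IsNthCosyz Λ n C Xm ∧
          CategoryTheory.Injective C} ≤ ((n' : ℕ) : ℕ∞) := sInf_le ⟨n', rfl, C', hC', hInj⟩
      rw [hS] at hle
      have : n' + 1 ≤ n' := by exact_mod_cast hle
      omega
    obtain ⟨ch⟩ := Paper.chain_exists (n' + 1) C Xm hcosC
    have hZtop : CategoryTheory.Injective (ch.Z (n' + 1)) := by
      obtain ⟨iso⟩ := ch.topIso
      exact CategoryTheory.Injective.of_iso iso.symm hCinj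
    have hZn'ninj : ¬ CategoryTheory.Injective (ch.Z n') := hminI _ (ch.cos n' (by omega))
    have henv := ch.env n' (by omega)
    have hex := ch.ex n' (by omega)
    have hne_top : LinearMap.range (ch.e n').hom ≠ ⊤ := by
      intro htop
      apply hZn'ninj
      have hbij : Function.Bijective (ch.e n') := by
        refine ⟨henv.2.1, fun y => ?_⟩
        have : y ∈ LinearMap.range (ch.e n').hom := htop ▸ Submodule.mem_top
        exact this
      exact CategoryTheory.Injective.of_iso
        (LinearEquiv.toModuleIso (LinearEquiv.ofBijective (ch.e n').hom hbij)).symm henv.1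
    obtain ⟨x₀, hx₀⟩ : ∃ x₀ : ch.I n', x₀ ∉ LinearMap.range (ch.e n').hom := by
      by_contra hall
      push_neg at hall
      exact hne_top (Submodule.eq_top_iff'.mpr hall)
    set z := (ch.r n') x₀ with hz
    have hzne : z ≠ 0 := by
      intro h0
      apply hx₀
      rw [← hex]
      exact h0
    -- Artinian: find a simple submodule of Z (n'+1)
    haveI hart : IsArtinianRing Λ := IsArtinianRing.of_finite K Λ
    set N₁ : Submodule Λ (ch.Z (n' + 1)) :=
      LinearMap.range (LinearMap.toSpanSingleton Λ (ch.Z (n' + 1)) z) with hN₁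
    haveI : IsArtinian Λ N₁ := isArtinian_range _
    have hzmem : z ∈ N₁ := ⟨1, by simp⟩
    haveI : Nontrivial N₁ := by
      refine ⟨⟨z, hzmem⟩, 0, ?_⟩
      intro hcontra
      exact hzne (congrArg Subtype.val hcontra)
    haveI : IsAtomic (Submodule Λ N₁) := isAtomic_of_orderBot_wellFounded_lt IsWellFounded.wf
    have htopbot : (⊤ : Submodule Λ N₁) ≠ ⊥ := by
      intro hcontra
      have : (⟨z, hzmem⟩ : N₁) ∈ (⊥ : Submodule Λ N₁) := hcontra ▸ Submodule.mem_top
      rw [Submodule.mem_bot] at this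
      exact hzne (congrArg Subtype.val this)
    obtain ⟨A, hAatom, -⟩ :=
      (IsAtomic.eq_bot_or_exists_atom_le (⊤ : Submodule Λ N₁)).resolve_left htopbot
    haveI hsimpleA : IsSimpleModule Λ A := isSimpleModule_iff_isAtom.mpr hAatom
    set S : ModuleCat.{0} Λ := ModuleCat.of Λ A with hSdef
    let ι : S ⟶ ch.Z (n' + 1) := ModuleCat.ofHom ((N₁.subtype).comp A.subtype)
    have hιinj : Function.Injective ι := by
      intro a b hab
      apply Subtype.ext
      apply Subtype.ext
      exact hab
    have hkey : ¬ ∃ l : S ⟶ ch.I n', l ≫ ch.r n' = ι := by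
      rintro ⟨l, hl⟩
      have hrange : LinearMap.range l.hom ⊓ LinearMap.range (ch.e n').hom = ⊥ := by
        rw [eq_bot_iff]
        rintro x ⟨⟨s, rfl⟩, hx2⟩
        rw [← hex] at hx2
        have hιs : ι s = 0 := by
          have := ConcreteCategory.congr_hom hl s
          rw [← this]
          exact hx2
        have hs0 : s = 0 := hιinj (by rw [hιs, map_zero])
        rw [Submodule.mem_bot, hs0, map_zero]
      have hl0 : LinearMap.range l.hom = ⊥ := henv.2.2 _ hrange
      obtain ⟨a, haA, hane⟩ := (Submodule.ne_bot_iff A).mp hAatom.1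
      set s : S := (⟨a, haA⟩ : A)
      have hls : l s = 0 := by
        have : l s ∈ LinearMap.range l.hom := ⟨s, rfl⟩
        rw [hl0, Submodule.mem_bot] at this
        exact this
      have hιs : ι s = 0 := by
        have := ConcreteCategory.congr_hom hl s
        rw [← this]
        show (ch.r n') (l s) = 0
        rw [hls, map_zero]
      apply hane
      apply Subtype.ext
      exact hιs
    -- conclude via subddell
    refine le_sSup_of_le ⟨S, hsimpleA, rfl⟩ ?_
    apply le_sInf
    rintro c' ⟨N, hNfin, ⟨jm, hjinj⟩, hkd⟩
    by_contra hlt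
    have hc'ne : c' ≠ ⊤ := by
      intro h
      rw [h] at hlt
      exact hlt le_top
    have hkS : sInf {c : ℕ∞ | ∃ m : ℕ, c = m ∧ Paper.kdellLE Λ 1 N m} = c' := hkd
    have hmem := Paper.enat_sInf_mem (by rw [hkS]; exact hc'ne)
    rw [hkS] at hmem
    obtain ⟨m₀, rfl, hkdle⟩ := hmem
    have hm₀ : m₀ < n' + 1 := by
      rcases lt_or_ge m₀ (n' + 1) with h | h
      · exact h
      · exact absurd (by exact_mod_cast h : ((n' + 1 : ℕ) : ℕ∞) ≤ ((m₀ : ℕ) : ℕ∞)) hlt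
    have hD := Paper.main_D1 ch m₀ hm₀ hZtop hkdle
    haveI := hZtop
    haveI : CategoryTheory.Mono jm := (ModuleCat.mono_iff_injective _).mpr hjinj
    let h' : N ⟶ ch.Z (n' + 1) := CategoryTheory.Injective.factorThru ι jm
    have hh' : jm ≫ h' = ι := CategoryTheory.Injective.comp_factorThru _ _
    obtain ⟨l', hl'⟩ := hD h'
    apply hkey
    refine ⟨jm ≫ l', ?_⟩
    ext s
    show (ch.r n') (l' (jm s)) = ι s
    calc (ch.r n') (l' (jm s)) = h' (jm s) := ConcreteCategory.congr_hom hl' (jm s)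
      _ = ι s := ConcreteCategory.congr_hom hh' s
  · -- sub-ddell Λ ≤ dell Λ
    apply sSup_le
    rintro c ⟨S, hsimple, rfl⟩
    refine le_trans ?_ (le_sSup ⟨S, hsimple, rfl⟩)
    apply sInf_le
    exact ⟨S, Paper.finite_of_isSimpleModule hsimple, ⟨𝟙 S, fun a b h => h⟩, rfl⟩
end
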